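/- arXiv:2408.06401 — 2 statements merged into one kernel-verified Lean document; each statement's English description precedes it below -/
import Mathlib

section
/- Let G : [0,∞) → Sym_r(ℝ) be a continuous curve of symmetric positive semi-definite matrices with all eigenvalues in [0,1], and let A solve the matrix ODE A'(t) = a G(t)(I_r - G(t)) with A(0) = G(0), where a > 0. Then for every i ∈ [r] and t ≥ 0, θ_i(G(0)) + a ∫₀ᵗ (θ_min(G(s)) - θ_max(G(s))²) ds ≤ μ_i(A(t)) ≤ θ_i(G(0)) + a ∫₀ᵗ (θ_max(G(s)) - θ_min(G(s))²) ds, where μ_i(A(t)) denotes the i-th eigenvalue of A(t) and θ_min, θ_max denote the smallest and largest eigenvalues of G. -/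
open Matrix MeasureTheory

/-- The eigenvalues of a real symmetric matrix, sorted in increasing order
(junk value `0` if the matrix is not symmetric). -/
noncomputable def sortedEigs {r : ℕ} (A : Matrix (Fin r) (Fin r) ℝ) (i : Fin r) : ℝ :=
  if hA : A.IsHermitian then
    ((Finset.univ.val.map hA.eigenvalues).sort (· ≤ ·)).getD i 0
  else 0

/-- The smallest eigenvalue of a real symmetric matrix (junk value if not symmetric). -/
noncomputable def eigMinOf {r : ℕ} (A : Matrix (Fin r) (Fin r) ℝ) : ℝ :=
  ⨅ i : Fin r, (if hA : A.IsHermitian then hA.eigenvalues i else 0)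

/-- The largest eigenvalue of a real symmetric matrix (junk value if not symmetric). -/
noncomputable def eigMaxOf {r : ℕ} (A : Matrix (Fin r) (Fin r) ℝ) : ℝ :=
  ⨆ i : Fin r, (if hA : A.IsHermitian then hA.eigenvalues i else 0)

/-!
Along the flow, the quadratic form of `A` satisfies `xᵀA(t)x - xᵀA(0)x = a ∫₀ᵗ xᵀG(I - G)x ds`.
Diagonalising `G(s)`, the eigenvalues of `G(I - G)` are `θ - θ²` with `θ ∈ [θ_min, θ_max] ⊆ [0, ∞)`,
so `xᵀG(I - G)x / |x|²` lies between `θ_min - θ_max²` and `θ_max - θ_min²`. Hence `A(t) - A(0)` is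
squeezed between two multiples of the identity, and Weyl's monotonicity principle moves each sorted
eigenvalue by at most as much. Weyl's principle is proved as in Courant–Fischer: by a dimension
count some `x ≠ 0` lies in the span of the eigenvectors of `A` of index `≥ i` and in that of the
eigenvectors of `B` of index `≤ i`. The same principle makes the sorted eigenvalues, hence `θ_min`
and `θ_max`, continuous along `G`, so the integrals in the statement are not junk values.
-/

open Filter Topology

namespace Matrix

theorem dotProduct_mulVec_eq_sum_sum {n : Type*} [Fintype n] (D : Matrix n n ℝ) (x : n → ℝ) :
    x ⬝ᵥ (D *ᵥ x) = ∑ i, ∑ j, D i j * (x i * x j) := by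
  simp only [dotProduct, mulVec, Finset.mul_sum]
  exact Finset.sum_congr rfl fun i _ => Finset.sum_congr rfl fun j _ => by ring

theorem abs_dotProduct_mulVec_le {n : Type*} [Fintype n] (D : Matrix n n ℝ) (x : n → ℝ) :
    |x ⬝ᵥ (D *ᵥ x)| ≤ (∑ i, ∑ j, |D i j|) * (x ⬝ᵥ x) := by
  have hsq : ∀ i, x i ^ 2 ≤ x ⬝ᵥ x := fun i =>
    (sq (x i)).trans_le (Finset.single_le_sum (f := fun j => x j * x j)
      (fun j _ => mul_self_nonneg _) (Finset.mem_univ i))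
  have hprod : ∀ i j, |x i * x j| ≤ x ⬝ᵥ x := fun i j => by
    rw [abs_mul]
    nlinarith [hsq i, hsq j, sq_nonneg (|x i| - |x j|), sq_abs (x i), sq_abs (x j)]
  rw [dotProduct_mulVec_eq_sum_sum, Finset.sum_mul]
  refine (Finset.abs_sum_le_sum_abs _ _).trans (Finset.sum_le_sum fun i _ => ?_)
  rw [Finset.sum_mul]
  refine (Finset.abs_sum_le_sum_abs _ _).trans (Finset.sum_le_sum fun j _ => ?_)
  rw [abs_mul]
  exact mul_le_mul_of_nonneg_left (hprod i j) (abs_nonneg _)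

theorem hasDerivAt_dotProduct_mulVec {n : Type*} [Fintype n] {A : ℝ → Matrix n n ℝ}
    {A' : Matrix n n ℝ} {t : ℝ} (hA : ∀ i j, HasDerivAt (fun s => A s i j) (A' i j) t)
    (x : n → ℝ) : HasDerivAt (fun s => x ⬝ᵥ (A s *ᵥ x)) (x ⬝ᵥ (A' *ᵥ x)) t := by
  simp only [dotProduct_mulVec_eq_sum_sum]
  exact HasDerivAt.fun_sum fun i _ => HasDerivAt.fun_sum fun j _ => (hA i j).mul_const _

theorem continuousOn_dotProduct_mulVec {n X : Type*} [Fintype n] [TopologicalSpace X]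
    {M : X → Matrix n n ℝ} {S : Set X} (hM : ContinuousOn M S) (x : n → ℝ) :
    ContinuousOn (fun s => x ⬝ᵥ (M s *ᵥ x)) S :=
  (continuous_const.dotProduct (continuous_id.matrix_mulVec continuous_const)).comp_continuousOn hM

theorem dotProduct_mulVec_sub_eq_integral {n : Type*} [Fintype n] {A A' : ℝ → Matrix n n ℝ}
    {t₀ t₁ : ℝ} (hA : ∀ s ∈ Set.uIcc t₀ t₁, ∀ i j, HasDerivAt (fun s => A s i j) (A' s i j) s)
    (hA' : ContinuousOn A' (Set.uIcc t₀ t₁)) (x : n → ℝ) :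
    x ⬝ᵥ (A t₁ *ᵥ x) - x ⬝ᵥ (A t₀ *ᵥ x) = ∫ s in t₀..t₁, x ⬝ᵥ (A' s *ᵥ x) :=
  (intervalIntegral.integral_eq_sub_of_hasDerivAt
    (fun s hs => hasDerivAt_dotProduct_mulVec (hA s hs) x)
    (continuousOn_dotProduct_mulVec hA' x).intervalIntegrable).symm

theorem exists_ne_zero_forall_lt_forall_gt {K : Type*} [Field K] {r : ℕ}
    (f g : (Fin r → K) →ₗ[K] (Fin r → K)) (i : Fin r) :
    ∃ x ≠ 0, (∀ j < i, f x j = 0) ∧ ∀ j, i < j → g x j = 0 := by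
  let L : (Fin r → K) →ₗ[K] ({j : Fin r // j ≠ i} → K) := LinearMap.pi fun j =>
    if (j : Fin r) < i then LinearMap.proj (j : Fin r) ∘ₗ f else LinearMap.proj (j : Fin r) ∘ₗ g
  have hdim : Module.finrank K ({j : Fin r // j ≠ i} → K) < Module.finrank K (Fin r → K) := by
    simp only [Module.finrank_fintype_fun_eq_card, Fintype.card_subtype_compl,
      Fintype.card_unique, Fintype.card_fin]
    exact Nat.sub_lt i.pos one_pos
  obtain ⟨x, hxL, hx0⟩ :=
    Submodule.exists_mem_ne_zero_of_ne_bot (LinearMap.ker_ne_bot_of_finrank_lt (f := L) hdim)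
  have hLx := LinearMap.mem_ker.1 hxL
  refine ⟨x, hx0, fun j hj => ?_, fun j hj => ?_⟩
  · simpa [L, hj] using congrFun hLx ⟨j, hj.ne⟩
  · simpa [L, hj.not_gt] using congrFun hLx ⟨j, hj.ne'⟩

namespace IsHermitian

section Spectral

variable {n : Type*} [Fintype n] [DecidableEq n] {A : Matrix n n ℝ}

theorem dotProduct_cfc_mulVec (hA : A.IsHermitian) (f : ℝ → ℝ) (x : n → ℝ) :
    x ⬝ᵥ (cfc f A *ᵥ x) = ∑ k, f (hA.eigenvalues k) *
      (star (hA.eigenvectorUnitary : Matrix n n ℝ) *ᵥ x) k ^ 2 := by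
  set U : Matrix n n ℝ := (hA.eigenvectorUnitary : Matrix n n ℝ)
  have hU : Uᵀ = star U := by simp [U, star_eq_conjTranspose]
  rw [hA.cfc_eq, IsHermitian.cfc, Unitary.conjStarAlgAut_apply, ← mulVec_mulVec, ← mulVec_mulVec,
    dotProduct_mulVec, ← mulVec_transpose, hU]
  simp only [mulVec_diagonal, dotProduct, Function.comp_apply, RCLike.ofReal_real_eq_id, id]
  exact Finset.sum_congr rfl fun k _ => by ring

theorem dotProduct_mulVec_eq_sum (hA : A.IsHermitian) (x : n → ℝ) :
    x ⬝ᵥ (A *ᵥ x) = ∑ k, hA.eigenvalues k *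
      (star (hA.eigenvectorUnitary : Matrix n n ℝ) *ᵥ x) k ^ 2 := by
  simpa [cfc_id ℝ A] using hA.dotProduct_cfc_mulVec id x

theorem dotProduct_self_eq_sum (hA : A.IsHermitian) (x : n → ℝ) :
    x ⬝ᵥ x = ∑ k, (star (hA.eigenvectorUnitary : Matrix n n ℝ) *ᵥ x) k ^ 2 := by
  simpa [cfc_const_one ℝ A] using hA.dotProduct_cfc_mulVec (fun _ => 1) x

theorem mul_dotProduct_self_le_dotProduct_cfc_mulVec (hA : A.IsHermitian) {f : ℝ → ℝ} {c : ℝ}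
    (hf : ∀ k, c ≤ f (hA.eigenvalues k)) (x : n → ℝ) :
    c * (x ⬝ᵥ x) ≤ x ⬝ᵥ (cfc f A *ᵥ x) := by
  rw [hA.dotProduct_cfc_mulVec, hA.dotProduct_self_eq_sum, Finset.mul_sum]
  exact Finset.sum_le_sum fun k _ => mul_le_mul_of_nonneg_right (hf k) (sq_nonneg _)

theorem dotProduct_cfc_mulVec_le_mul_dotProduct_self (hA : A.IsHermitian) {f : ℝ → ℝ} {c : ℝ}
    (hf : ∀ k, f (hA.eigenvalues k) ≤ c) (x : n → ℝ) :
    x ⬝ᵥ (cfc f A *ᵥ x) ≤ c * (x ⬝ᵥ x) := by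
  rw [hA.dotProduct_cfc_mulVec, hA.dotProduct_self_eq_sum, Finset.mul_sum]
  exact Finset.sum_le_sum fun k _ => mul_le_mul_of_nonneg_right (hf k) (sq_nonneg _)

theorem mul_one_sub_eq_cfc (hA : A.IsHermitian) :
    A * (1 - A) = cfc (fun θ : ℝ => θ * (1 - θ)) A := by
  rw [cfc_mul .., cfc_sub .., cfc_const_one ℝ A, cfc_id' ℝ A]

end Spectral

section Sorted

variable {r : ℕ} {A B : Matrix (Fin r) (Fin r) ℝ}

theorem sortedEigs_eq_eigenvalues_sort (hA : A.IsHermitian) (i : Fin r) :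
    sortedEigs A i = hA.eigenvalues (Tuple.sort hA.eigenvalues i) := by
  have hsort : (Finset.univ.val.map hA.eigenvalues).sort (· ≤ ·) =
      List.ofFn (hA.eigenvalues ∘ Tuple.sort hA.eigenvalues) := by
    refine List.Perm.eq_of_pairwise' (r := (· ≤ ·)) (Multiset.pairwise_sort _ _)
      (List.sortedLE_ofFn_iff.2 (Tuple.monotone_sort _)).pairwise ?_
    rw [← Multiset.coe_eq_coe, Multiset.sort_eq, ← Fin.univ_val_map, ← Multiset.map_map]
    exact congrArg _ (congrArg Finset.val (Finset.map_univ_equiv (Tuple.sort _))).symm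
  rw [sortedEigs, dif_pos hA, hsort, List.getD_eq_getElem _ _ (by simp), List.getElem_ofFn]
  rfl

theorem sortedEigs_mul_le_dotProduct_mulVec (hA : A.IsHermitian) {i : Fin r} {x : Fin r → ℝ}
    (hx : ∀ j < i, (star (hA.eigenvectorUnitary : Matrix _ _ ℝ) *ᵥ x)
      (Tuple.sort hA.eigenvalues j) = 0) :
    sortedEigs A i * (x ⬝ᵥ x) ≤ x ⬝ᵥ (A *ᵥ x) := by
  rw [hA.dotProduct_mulVec_eq_sum, hA.dotProduct_self_eq_sum, Finset.mul_sum]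
  refine Finset.sum_le_sum fun k _ => ?_
  obtain ⟨j, rfl⟩ := (Tuple.sort hA.eigenvalues).surjective k
  rcases lt_or_ge j i with hj | hj
  · simp [hx j hj]
  · rw [hA.sortedEigs_eq_eigenvalues_sort]
    exact mul_le_mul_of_nonneg_right (Tuple.monotone_sort hA.eigenvalues hj) (sq_nonneg _)

theorem dotProduct_mulVec_le_sortedEigs_mul (hA : A.IsHermitian) {i : Fin r} {x : Fin r → ℝ}
    (hx : ∀ j, i < j → (star (hA.eigenvectorUnitary : Matrix _ _ ℝ) *ᵥ x)
      (Tuple.sort hA.eigenvalues j) = 0) :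
    x ⬝ᵥ (A *ᵥ x) ≤ sortedEigs A i * (x ⬝ᵥ x) := by
  rw [hA.dotProduct_mulVec_eq_sum, hA.dotProduct_self_eq_sum, Finset.mul_sum]
  refine Finset.sum_le_sum fun k _ => ?_
  obtain ⟨j, rfl⟩ := (Tuple.sort hA.eigenvalues).surjective k
  rcases le_or_gt j i with hj | hj
  · rw [hA.sortedEigs_eq_eigenvalues_sort]
    exact mul_le_mul_of_nonneg_right (Tuple.monotone_sort hA.eigenvalues hj) (sq_nonneg _)
  · simp [hx j hj]

theorem sortedEigs_add_le_of_le_dotProduct_mulVec_sub (hA : A.IsHermitian) (hB : B.IsHermitian)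
    {c : ℝ} (h : ∀ x, c * (x ⬝ᵥ x) ≤ x ⬝ᵥ (B *ᵥ x) - x ⬝ᵥ (A *ᵥ x)) (i : Fin r) :
    sortedEigs A i + c ≤ sortedEigs B i := by
  let eigenCoords {M : Matrix (Fin r) (Fin r) ℝ} (hM : M.IsHermitian) :
      (Fin r → ℝ) →ₗ[ℝ] (Fin r → ℝ) :=
    LinearMap.funLeft ℝ ℝ (Tuple.sort hM.eigenvalues) ∘ₗ
      (star (hM.eigenvectorUnitary : Matrix _ _ ℝ)).mulVecLin
  obtain ⟨x, hx0, hxA, hxB⟩ :=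
    exists_ne_zero_forall_lt_forall_gt (eigenCoords hA) (eigenCoords hB) i
  have hx : 0 < x ⬝ᵥ x :=
    (dotProduct_star_self_nonneg x).lt_of_ne' (dotProduct_self_eq_zero.not.2 hx0)
  refine le_of_mul_le_mul_right ?_ hx
  calc (sortedEigs A i + c) * (x ⬝ᵥ x) = sortedEigs A i * (x ⬝ᵥ x) + c * (x ⬝ᵥ x) := add_mul ..
    _ ≤ x ⬝ᵥ (A *ᵥ x) + (x ⬝ᵥ (B *ᵥ x) - x ⬝ᵥ (A *ᵥ x)) :=
      add_le_add (hA.sortedEigs_mul_le_dotProduct_mulVec hxA) (h x)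
    _ ≤ sortedEigs B i * (x ⬝ᵥ x) := by
      rw [add_sub_cancel]
      exact hB.dotProduct_mulVec_le_sortedEigs_mul hxB

theorem abs_sortedEigs_sub_le (hA : A.IsHermitian) (hB : B.IsHermitian) (i : Fin r) :
    |sortedEigs A i - sortedEigs B i| ≤ ∑ p, ∑ q, |A p q - B p q| := by
  set ε := ∑ p, ∑ q, |A p q - B p q|
  have hAB x := abs_le.1 (abs_dotProduct_mulVec_le (A - B) x)
  simp only [sub_mulVec, dotProduct_sub, sub_apply] at hAB
  rw [abs_sub_le_iff]
  constructor
  · linarith [hA.sortedEigs_add_le_of_le_dotProduct_mulVec_sub hB (c := -ε)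
      (fun x => by linarith [(hAB x).2]) i]
  · linarith [hB.sortedEigs_add_le_of_le_dotProduct_mulVec_sub hA (c := -ε)
      (fun x => by linarith [(hAB x).1]) i]

end Sorted

end IsHermitian

end Matrix

section Extremal

variable {r : ℕ} {A : Matrix (Fin r) (Fin r) ℝ}

theorem continuousOn_sortedEigs {X : Type*} [TopologicalSpace X] {M : X → Matrix (Fin r) (Fin r) ℝ}
    {S : Set X} (hM : ContinuousOn M S) (hS : ∀ s ∈ S, (M s).IsHermitian) (i : Fin r) :
    ContinuousOn (fun s => sortedEigs (M s) i) S := by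
  intro s₀ hs₀
  rw [ContinuousWithinAt, tendsto_iff_dist_tendsto_zero]
  have hdist : Continuous fun N : Matrix (Fin r) (Fin r) ℝ => ∑ p, ∑ q, |N p q - M s₀ p q| := by
    fun_prop
  have hε : Tendsto (fun s => ∑ p, ∑ q, |M s p q - M s₀ p q|) (𝓝[S] s₀) (𝓝 0) := by
    simpa [Function.comp_def] using (hdist.tendsto (M s₀)).comp (hM s₀ hs₀)
  refine squeeze_zero' (Eventually.of_forall fun s => dist_nonneg) ?_ hε
  filter_upwards [self_mem_nhdsWithin] with s hs
  exact (hS s hs).abs_sortedEigs_sub_le (hS s₀ hs₀) i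

theorem eigMinOf_le (hA : A.IsHermitian) (k : Fin r) : eigMinOf A ≤ hA.eigenvalues k := by
  simpa only [eigMinOf, dif_pos hA] using ciInf_le (Finite.bddBelow_range
    fun j => if hA : A.IsHermitian then hA.eigenvalues j else 0) k

theorem le_eigMaxOf (hA : A.IsHermitian) (k : Fin r) : hA.eigenvalues k ≤ eigMaxOf A := by
  simpa only [eigMaxOf, dif_pos hA] using le_ciSup (Finite.bddAbove_range
    fun j => if hA : A.IsHermitian then hA.eigenvalues j else 0) k

theorem eigMinOf_eq_sortedEigs_bot [NeZero r] (hA : A.IsHermitian) :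
    eigMinOf A = sortedEigs A ⊥ := by
  refine le_antisymm (hA.sortedEigs_eq_eigenvalues_sort ⊥ ▸ eigMinOf_le hA _) (le_ciInf fun k => ?_)
  obtain ⟨j, rfl⟩ := (Tuple.sort hA.eigenvalues).surjective k
  rw [dif_pos hA, hA.sortedEigs_eq_eigenvalues_sort]
  exact Tuple.monotone_sort hA.eigenvalues bot_le

theorem eigMaxOf_eq_sortedEigs_top [NeZero r] (hA : A.IsHermitian) :
    eigMaxOf A = sortedEigs A ⊤ := by
  refine le_antisymm (ciSup_le fun k => ?_) (hA.sortedEigs_eq_eigenvalues_sort ⊤ ▸ le_eigMaxOf hA _)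
  obtain ⟨j, rfl⟩ := (Tuple.sort hA.eigenvalues).surjective k
  rw [dif_pos hA, hA.sortedEigs_eq_eigenvalues_sort]
  exact Tuple.monotone_sort hA.eigenvalues le_top

theorem continuousOn_eigMinOf [NeZero r] {X : Type*} [TopologicalSpace X]
    {M : X → Matrix (Fin r) (Fin r) ℝ} {S : Set X} (hM : ContinuousOn M S)
    (hS : ∀ s ∈ S, (M s).IsHermitian) : ContinuousOn (fun s => eigMinOf (M s)) S :=
  (continuousOn_sortedEigs hM hS ⊥).congr fun s hs => eigMinOf_eq_sortedEigs_bot (hS s hs)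

theorem continuousOn_eigMaxOf [NeZero r] {X : Type*} [TopologicalSpace X]
    {M : X → Matrix (Fin r) (Fin r) ℝ} {S : Set X} (hM : ContinuousOn M S)
    (hS : ∀ s ∈ S, (M s).IsHermitian) : ContinuousOn (fun s => eigMaxOf (M s)) S :=
  (continuousOn_sortedEigs hM hS ⊤).congr fun s hs => eigMaxOf_eq_sortedEigs_top (hS s hs)

theorem Matrix.PosSemidef.eigMinOf_nonneg (hA : A.PosSemidef) : 0 ≤ eigMinOf A :=
  Real.iInf_nonneg fun k => by rw [dif_pos hA.1]; exact hA.eigenvalues_nonneg k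

end Extremal

namespace Matrix.PosSemidef

variable {r : ℕ} {G : Matrix (Fin r) (Fin r) ℝ}

theorem eigMinOf_sub_eigMaxOf_sq_mul_le (hG : G.PosSemidef) (x : Fin r → ℝ) :
    (eigMinOf G - eigMaxOf G ^ 2) * (x ⬝ᵥ x) ≤ x ⬝ᵥ ((G * (1 - G)) *ᵥ x) := by
  rw [hG.1.mul_one_sub_eq_cfc]
  refine hG.1.mul_dotProduct_self_le_dotProduct_cfc_mulVec (fun k => ?_) x
  have hmin := eigMinOf_le hG.1 k
  have hmax := le_eigMaxOf hG.1 k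
  nlinarith [hG.eigenvalues_nonneg k]

theorem dotProduct_mul_one_sub_mulVec_le (hG : G.PosSemidef) (x : Fin r → ℝ) :
    x ⬝ᵥ ((G * (1 - G)) *ᵥ x) ≤ (eigMaxOf G - eigMinOf G ^ 2) * (x ⬝ᵥ x) := by
  rw [hG.1.mul_one_sub_eq_cfc]
  refine hG.1.dotProduct_cfc_mulVec_le_mul_dotProduct_self (fun k => ?_) x
  have hmin := eigMinOf_le hG.1 k
  have hmax := le_eigMaxOf hG.1 k
  nlinarith [hG.eigMinOf_nonneg]

end Matrix.PosSemidef

section Flow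

variable {r : ℕ} {A A' : ℝ → Matrix (Fin r) (Fin r) ℝ} {t₀ t₁ : ℝ}

theorem sortedEigs_add_integral_le (ht : t₀ ≤ t₁) (h₀ : (A t₀).IsHermitian)
    (h₁ : (A t₁).IsHermitian)
    (hA : ∀ s ∈ Set.Icc t₀ t₁, ∀ i j, HasDerivAt (fun s => A s i j) (A' s i j) s)
    (hA' : ContinuousOn A' (Set.Icc t₀ t₁)) {f : ℝ → ℝ} (hf : IntervalIntegrable f volume t₀ t₁)
    (hfA' : ∀ s ∈ Set.Icc t₀ t₁, ∀ x, f s * (x ⬝ᵥ x) ≤ x ⬝ᵥ (A' s *ᵥ x)) (i : Fin r) :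
    sortedEigs (A t₀) i + ∫ s in t₀..t₁, f s ≤ sortedEigs (A t₁) i := by
  rw [← Set.uIcc_of_le ht] at hA hA'
  refine h₀.sortedEigs_add_le_of_le_dotProduct_mulVec_sub h₁ (fun x => ?_) i
  rw [dotProduct_mulVec_sub_eq_integral hA hA', ← intervalIntegral.integral_mul_const]
  exact intervalIntegral.integral_mono_on ht (hf.mul_const _)
    (continuousOn_dotProduct_mulVec hA' x).intervalIntegrable fun s hs => hfA' s hs x

theorem sortedEigs_le_add_integral (ht : t₀ ≤ t₁) (h₀ : (A t₀).IsHermitian)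
    (h₁ : (A t₁).IsHermitian)
    (hA : ∀ s ∈ Set.Icc t₀ t₁, ∀ i j, HasDerivAt (fun s => A s i j) (A' s i j) s)
    (hA' : ContinuousOn A' (Set.Icc t₀ t₁)) {g : ℝ → ℝ} (hg : IntervalIntegrable g volume t₀ t₁)
    (hgA' : ∀ s ∈ Set.Icc t₀ t₁, ∀ x, x ⬝ᵥ (A' s *ᵥ x) ≤ g s * (x ⬝ᵥ x)) (i : Fin r) :
    sortedEigs (A t₁) i ≤ sortedEigs (A t₀) i + ∫ s in t₀..t₁, g s := by
  rw [← Set.uIcc_of_le ht] at hA hA'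
  suffices sortedEigs (A t₁) i + -∫ s in t₀..t₁, g s ≤ sortedEigs (A t₀) i by linarith
  refine h₁.sortedEigs_add_le_of_le_dotProduct_mulVec_sub h₀ (fun x => ?_) i
  rw [neg_mul, ← intervalIntegral.integral_mul_const, neg_le, neg_sub,
    dotProduct_mulVec_sub_eq_integral hA hA']
  exact intervalIntegral.integral_mono_on ht
    (continuousOn_dotProduct_mulVec hA' x).intervalIntegrable (hg.mul_const _)
    fun s hs => hgA' s hs x

end Flow

theorem matrix_riccati_eigenvalue_comparison_general
    {r : ℕ} (a : ℝ) (ha : 0 < a)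
    (G A : ℝ → Matrix (Fin r) (Fin r) ℝ)
    (hGcont : ∀ i j, Continuous fun t => G t i j)
    (hGpsd : ∀ t, 0 ≤ t → (G t).PosSemidef)
    (hAsymm : ∀ t, (A t).IsHermitian)
    (hODE : ∀ t, 0 ≤ t → ∀ i j,
      HasDerivAt (fun s => A s i j) (a * (G t * (1 - G t)) i j) t)
    (hA0 : A 0 = G 0) :
    ∀ (i : Fin r) (t : ℝ), 0 ≤ t →
      sortedEigs (G 0) i + a * ∫ s in (0 : ℝ)..t, (eigMinOf (G s) - eigMaxOf (G s) ^ 2)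
          ≤ sortedEigs (A t) i ∧
      sortedEigs (A t) i
          ≤ sortedEigs (G 0) i + a * ∫ s in (0 : ℝ)..t, (eigMaxOf (G s) - eigMinOf (G s) ^ 2) := by
  intro i t ht
  have : NeZero r := ⟨i.pos.ne'⟩
  have hG : Continuous G := continuous_pi fun p => continuous_pi fun q => hGcont p q
  have hGpsd' (s) (hs : s ∈ Set.Icc 0 t) := hGpsd s hs.1
  have hmin := continuousOn_eigMinOf hG.continuousOn fun s hs => (hGpsd' s hs).1
  have hmax := continuousOn_eigMaxOf hG.continuousOn fun s hs => (hGpsd' s hs).1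
  have hA' : ContinuousOn (fun s => a • (G s * (1 - G s))) (Set.Icc 0 t) := by fun_prop
  have hA (s) (hs : s ∈ Set.Icc 0 t) (p q : Fin r) :
      HasDerivAt (fun s => A s p q) ((a • (G s * (1 - G s))) p q) s := hODE s hs.1 p q
  simp only [← intervalIntegral.integral_const_mul, ← hA0]
  constructor
  · refine sortedEigs_add_integral_le (f := fun s => a * (eigMinOf (G s) - eigMaxOf (G s) ^ 2))
      ht (hAsymm 0) (hAsymm t) hA hA'
      ((continuousOn_const.mul (hmin.sub (hmax.pow 2))).intervalIntegrable_of_Icc ht)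
      (fun s hs x => ?_) i
    rw [smul_mulVec, dotProduct_smul, smul_eq_mul, mul_assoc]
    exact mul_le_mul_of_nonneg_left ((hGpsd' s hs).eigMinOf_sub_eigMaxOf_sq_mul_le x) ha.le
  · refine sortedEigs_le_add_integral (g := fun s => a * (eigMaxOf (G s) - eigMinOf (G s) ^ 2))
      ht (hAsymm 0) (hAsymm t) hA hA'
      ((continuousOn_const.mul (hmax.sub (hmin.pow 2))).intervalIntegrable_of_Icc ht)
      (fun s hs x => ?_) i
    rw [smul_mulVec, dotProduct_smul, smul_eq_mul, mul_assoc]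
    exact mul_le_mul_of_nonneg_left ((hGpsd' s hs).dotProduct_mul_one_sub_mulVec_le x) ha.le

/-- **Integral comparison inequality for the eigenvalues of the solution of the
matrix Riccati ODE `A' = a G (I - G)`, `A 0 = G 0`.** -/
theorem matrix_riccati_eigenvalue_comparison
    {r : ℕ} (hr : 0 < r) (a : ℝ) (ha : 0 < a)
    (G A : ℝ → Matrix (Fin r) (Fin r) ℝ)
    (hGcont : ∀ i j, Continuous fun t => G t i j)
    (hGpsd : ∀ t, 0 ≤ t → (G t).PosSemidef)
    (hGeig : ∀ t, 0 ≤ t → ∀ i, sortedEigs (G t) i ∈ Set.Icc (0 : ℝ) 1)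
    (hAsymm : ∀ t, (A t).IsHermitian)
    (hODE : ∀ t, 0 ≤ t → ∀ i j,
      HasDerivAt (fun s => A s i j) (a * (G t * (1 - G t)) i j) t)
    (hA0 : A 0 = G 0) :
    ∀ (i : Fin r) (t : ℝ), 0 ≤ t →
      sortedEigs (G 0) i + a * ∫ s in (0 : ℝ)..t, (eigMinOf (G s) - eigMaxOf (G s) ^ 2)
          ≤ sortedEigs (A t) i ∧
      sortedEigs (A t) i
          ≤ sortedEigs (G 0) i + a * ∫ s in (0 : ℝ)..t, (eigMaxOf (G s) - eigMinOf (G s) ^ 2) :=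
  matrix_riccati_eigenvalue_comparison_general a ha G A hGcont hGpsd hAsymm hODE hA0
end

section
/- Let Z ∈ ℝ^{N×r} have i.i.d. standard Gaussian entries and let V ∈ ℝ^{N×r} have orthogonal columns of norm √N. If X = Z((1/N)ZᵀZ)^{-1/2} (which is Haar-distributed on the normalized Stiefel manifold) and G = MᵀM with M = (1/N)VᵀX, then there exist constants C(r), c(r) > 0 such that for every t > 0, P(λ_max(G) > r/N + t) ≤ C(r) exp(-c(r) N t). -/
open MeasureTheory Matrix

/-- Matrices over a measurable space carry the product measurable structure. -/
instance matrixMeasurableSpace {m n α : Type*} [MeasurableSpace α] :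
    MeasurableSpace (Matrix m n α) :=
  (inferInstance : MeasurableSpace (m → n → α))

/-- The positive semi-definite square root of a matrix
(junk value `0` if the matrix is not positive semi-definite). -/
noncomputable def psdSqrt {n : ℕ} (A : Matrix (Fin n) (Fin n) ℝ) :
    Matrix (Fin n) (Fin n) ℝ :=
  letI := Classical.propDecidable A.PosSemidef
  if hA : A.PosSemidef then
    hA.1.eigenvectorUnitary.1 * diagonal (Real.sqrt ∘ hA.1.eigenvalues) *
      (star hA.1.eigenvectorUnitary : Matrix (Fin n) (Fin n) ℝ)
  else 0

open ProbabilityTheory Real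
open scoped NNReal

/-!
Write `A = N⁻¹ ZᵀZ` and `S = A^{1/2}`, so that `M = N⁻¹ VᵀZ S⁻¹`. For a unit vector `v` and
`w = S⁻¹ v` one has `wᵀ A w = 1`, i.e. `‖Z w‖² = N`; since `VᵀV = N`, this gives `‖M v‖ ≤ 1`,
so `λ_max(G) ≤ 1` and the event is empty for `t ≥ 1`. If every entry of `A - 1` has absolute
value at most `1/(2r)` then `‖w‖² ≤ 2`, and if moreover every entry of `N⁻¹ VᵀZ` has absolute
value at most `√(t/2)/r` then `‖M v‖² ≤ t`. An entry of `N (A - 1)` is a sum of `N` independent sub-exponential variables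
`Z_ki Z_kj - δ_ij`, controlled by a Chernoff bound at one fixed parameter, and an entry of
`VᵀZ` is Gaussian of variance `N`; a union bound over the `r²` entries gives
`P(λ_max(G) > t) ≤ 4 r² exp(-N t / (64 r²))`.
-/

lemma inv_sqrt_one_sub_le_exp {x : ℝ} (hx : |x| ≤ 1 / 2) :
    (√(1 - x))⁻¹ ≤ exp ((x + 2 * x ^ 2) / 2) := by
  have hlog := abs_log_sub_add_sum_range_le (show |x| < 1 by linarith) 1
  simp only [Finset.range_one, Finset.sum_singleton, zero_add, pow_one, Nat.cast_zero,
    div_one] at hlog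
  have habs := abs_le.1 hx
  have hrem : |x| ^ 2 / (1 - |x|) ≤ 2 * x ^ 2 := by
    rw [div_le_iff₀ (by linarith), sq_abs]
    nlinarith [sq_nonneg x]
  rw [← sqrt_inv, exp_half, sqrt_le_sqrt_iff (exp_pos _).le,
    ← exp_log (inv_pos.2 (by linarith : 0 < 1 - x)), log_inv, exp_le_exp]
  linarith [(abs_le.1 (hlog.trans hrem)).1]

lemma exp_neg_mul_inv_sqrt_one_sub_two_mul_le {u : ℝ} (hu : |u| ≤ 1 / 4) :
    exp (-u) * (√(1 - 2 * u))⁻¹ ≤ exp (4 * u ^ 2) := by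
  have h := inv_sqrt_one_sub_le_exp (x := 2 * u) (by rw [abs_mul, abs_two]; linarith)
  calc exp (-u) * (√(1 - 2 * u))⁻¹ ≤ exp (-u) * exp ((2 * u + 2 * (2 * u) ^ 2) / 2) := by
        gcongr
    _ = exp (4 * u ^ 2) := by rw [← exp_add]; ring_nf

lemma inv_sqrt_one_sub_sq_le {u : ℝ} (hu : |u| ≤ 1 / 4) :
    (√(1 - u ^ 2))⁻¹ ≤ exp (4 * u ^ 2) := by
  have hu2 : u ^ 2 ≤ 1 / 16 := by nlinarith [sq_abs u, abs_nonneg u]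
  refine (inv_sqrt_one_sub_le_exp (x := u ^ 2) ?_).trans (exp_le_exp.2 (by nlinarith))
  rw [abs_of_nonneg (sq_nonneg u)]
  linarith

lemma mgf_sq_gaussianReal {b : ℝ} (hb : b < 1 / 2) :
    mgf (fun x => x ^ 2) (gaussianReal 0 1) b = (√(1 - 2 * b))⁻¹ := by
  have hβ : 0 < 1 / 2 - b := by linarith
  have hdensity : ∀ x, gaussianPDFReal 0 1 x • exp (b * x ^ 2) =
      (√(2 * π))⁻¹ * exp (-(1 / 2 - b) * x ^ 2) := fun x => by
    rw [gaussianPDFReal, smul_eq_mul, mul_assoc, ← exp_add]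
    push_cast
    ring_nf
  rw [mgf, integral_gaussianReal_eq_integral_smul one_ne_zero]
  simp_rw [hdensity]
  rw [integral_const_mul, integral_gaussian,
    show π / (1 / 2 - b) = 2 * π / (1 - 2 * b) by field_simp, sqrt_div (by positivity),
    div_eq_mul_inv, ← mul_assoc, inv_mul_cancel₀ (by positivity), one_mul]

lemma mgf_mul_self_sub_one_gaussianReal {b : ℝ} (hb : b < 1 / 2) :
    mgf (fun x => x * x - 1) (gaussianReal 0 1) b = exp (-b) * (√(1 - 2 * b))⁻¹ := by
  rw [show (fun x : ℝ => x * x - 1) = fun x => x ^ 2 + -1 by funext x; ring, mgf_add_const,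
    mgf_sq_gaussianReal hb, mul_comm, mul_neg_one]

lemma integrable_exp_mul_sq_gaussianReal {b : ℝ} (hb : b < 1 / 2) :
    Integrable (fun x => exp (b * x ^ 2)) (gaussianReal 0 1) := by
  rw [← mgf_pos_iff, mgf_sq_gaussianReal hb]
  have : 0 < 1 - 2 * b := by linarith
  positivity

lemma integral_exp_mul_mul_gaussianReal (c x : ℝ) :
    ∫ y, exp (c * (x * y)) ∂gaussianReal 0 1 = exp (c ^ 2 / 2 * x ^ 2) := by
  have h := congrFun (mgf_id_gaussianReal (μ := 0) (v := 1)) (c * x)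
  simp only [mgf, id] at h
  simp_rw [← mul_assoc c x]
  rw [h, NNReal.coe_one]
  ring_nf

lemma integrable_exp_mul_mul_gaussianReal_prod {c : ℝ} (hc : c ^ 2 < 1) :
    Integrable (fun p : ℝ × ℝ => exp (c * (p.1 * p.2)))
      ((gaussianReal 0 1).prod (gaussianReal 0 1)) := by
  refine (integrable_prod_iff (by fun_prop)).2 ⟨ae_of_all _ fun x => ?_, ?_⟩
  · simpa only [mul_assoc] using integrable_exp_mul_gaussianReal (μ := 0) (v := 1) (c * x)
  · simp only [norm_eq_abs, abs_exp, integral_exp_mul_mul_gaussianReal]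
    exact integrable_exp_mul_sq_gaussianReal (by linarith)

lemma mgf_mul_gaussianReal_prod {c : ℝ} (hc : c ^ 2 < 1) :
    mgf (fun p : ℝ × ℝ => p.1 * p.2) ((gaussianReal 0 1).prod (gaussianReal 0 1)) c =
      (√(1 - c ^ 2))⁻¹ := by
  rw [mgf, integral_prod _ (integrable_exp_mul_mul_gaussianReal_prod hc)]
  simp_rw [integral_exp_mul_mul_gaussianReal]
  rw [← mgf, mgf_sq_gaussianReal (by linarith)]
  ring_nf

namespace ProbabilityTheory

variable {Ω : Type*} {mΩ : MeasurableSpace Ω} {μ : Measure Ω}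

lemma iIndepFun.curry {ι κ 𝓧 : Type*} [MeasurableSpace 𝓧] {X : ι → κ → Ω → 𝓧}
    (mX : ∀ i j, Measurable (X i j)) (h : iIndepFun (fun p : ι × κ => X p.1 p.2) μ) :
    iIndepFun (fun i ω => (X i · ω)) μ := by
  have := h.isProbabilityMeasure
  have : ∀ i j, IsProbabilityMeasure (μ.map (X i j)) :=
    fun i j => Measure.isProbabilityMeasure_map (mX i j).aemeasurable
  have hjoint : μ.map (fun ω (p : ι × κ) => X p.1 p.2 ω) =
      Measure.infinitePi (fun p => μ.map (X p.1 p.2)) :=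
    h.map_fun_eq_infinitePi_map fun p => mX p.1 p.2
  rw [iIndepFun_iff_map_fun_eq_infinitePi_map fun i => by fun_prop]
  simp_rw [fun i => (h.precomp (Prod.mk_right_injective i)).map_fun_eq_infinitePi_map (mX i)]
  rw [← Measure.infinitePi_map_curry, ← hjoint, Measure.map_map (by fun_prop) (by fun_prop)]
  rfl

lemma HasLaw.mgf_comp {𝓧 : Type*} [MeasurableSpace 𝓧] {ν : Measure 𝓧} {X : Ω → 𝓧}
    (hX : HasLaw X ν μ) {f : 𝓧 → ℝ} (hf : Measurable f) (t : ℝ) :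
    mgf (fun ω => f (X ω)) μ t = mgf f ν t := by
  simp only [mgf]
  rw [← hX.map_eq, integral_map hX.aemeasurable (by fun_prop)]

lemma HasLaw.hasSubgaussianMGF_of_gaussianReal {X : Ω → ℝ} {v : ℝ≥0}
    (hX : HasLaw X (gaussianReal 0 v) μ) : HasSubgaussianMGF X v μ := by
  have := hX.isProbabilityMeasure
  have hmgf : ∀ t, mgf X μ t = exp (v * t ^ 2 / 2) := fun t => by
    rw [mgf_gaussianReal hX.map_eq, zero_mul, zero_add]
  exact ⟨fun t => mgf_pos_iff.1 (by rw [hmgf]; positivity), fun t => (hmgf t).le⟩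

lemma measureReal_abs_ge_le_add [IsFiniteMeasure μ] (X : Ω → ℝ) (ε : ℝ) :
    μ.real {ω | ε ≤ |X ω|} ≤ μ.real {ω | ε ≤ X ω} + μ.real {ω | ε ≤ -X ω} := by
  refine (measureReal_mono fun ω hω => ?_).trans (measureReal_union_le _ _)
  rcases le_abs'.1 (show ε ≤ |X ω| from hω) with h | h
  · exact Or.inr (show ε ≤ -X ω by linarith)
  · exact Or.inl h

lemma HasSubgaussianMGF.measureReal_abs_ge_le [IsFiniteMeasure μ] {X : Ω → ℝ} {c : ℝ≥0}
    (h : HasSubgaussianMGF X c μ) {ε : ℝ} (hε : 0 ≤ ε) :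
    μ.real {ω | ε ≤ |X ω|} ≤ 2 * exp (-ε ^ 2 / (2 * c)) := by
  have hneg := h.neg.measure_ge_le hε
  simp only [Pi.neg_apply] at hneg
  linarith [measureReal_abs_ge_le_add (μ := μ) X ε, h.measure_ge_le hε]

lemma measureReal_sum_ge_le_of_iIndepFun_of_mgf_le {ι : Type*} [Fintype ι] {X : ι → Ω → ℝ}
    (h_indep : iIndepFun X μ) (h_meas : ∀ i, Measurable (X i)) {t K : ℝ} (ht : 0 ≤ t)
    (h_int : ∀ i, Integrable (fun ω => exp (t * X i ω)) μ) (h_mgf : ∀ i, mgf (X i) μ t ≤ exp K)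
    (ε : ℝ) :
    μ.real {ω | ε ≤ ∑ i, X i ω} ≤ exp (-t * ε + Fintype.card ι * K) := by
  have := h_indep.isProbabilityMeasure
  have hchernoff := measure_ge_le_exp_mul_mgf ε ht
    (h_indep.integrable_exp_mul_sum h_meas (s := Finset.univ) fun i _ => h_int i)
  rw [h_indep.mgf_sum h_meas] at hchernoff
  simp only [Finset.sum_apply] at hchernoff
  refine hchernoff.trans ?_
  rw [exp_add, exp_nat_mul, ← Finset.card_univ, ← Finset.prod_const]
  gcongr with i
  · exact fun i _ => mgf_nonneg
  · exact h_mgf i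

end ProbabilityTheory

structure IsStdGaussianMatrix {Ω m n : Type*} [MeasurableSpace Ω] (Z : Ω → Matrix m n ℝ)
    (μ : Measure Ω) : Prop where
  measurable_entry : ∀ k l, Measurable fun ω => Z ω k l
  hasLaw_entry : ∀ k l, HasLaw (fun ω => Z ω k l) (gaussianReal 0 1) μ
  iIndepFun_entry : iIndepFun (fun (p : m × n) ω => Z ω p.1 p.2) μ

namespace IsStdGaussianMatrix

variable {Ω m n : Type*} {mΩ : MeasurableSpace Ω} {μ : Measure Ω} {Z : Ω → Matrix m n ℝ}

lemma measurable_row (hZ : IsStdGaussianMatrix Z μ) (k : m) : Measurable fun ω => Z ω k :=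
  measurable_pi_lambda _ (hZ.measurable_entry k)

lemma iIndepFun_comp_row (hZ : IsStdGaussianMatrix Z μ) {g : m → (n → ℝ) → ℝ}
    (hg : ∀ k, Measurable (g k)) : iIndepFun (fun k ω => g k (Z ω k)) μ :=
  (hZ.iIndepFun_entry.curry hZ.measurable_entry).comp g hg

lemma mgf_entry_mul_entry_sub_one_mem_Ioc [DecidableEq n] (hZ : IsStdGaussianMatrix Z μ)
    (k : m) (i j : n) {u : ℝ} (hu : |u| ≤ 1 / 4) :
    mgf (fun ω => Z ω k i * Z ω k j - (1 : Matrix n n ℝ) i j) μ u ∈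
      Set.Ioc 0 (exp (4 * u ^ 2)) := by
  have := hZ.iIndepFun_entry.isProbabilityMeasure
  have hu' := abs_le.1 hu
  rcases eq_or_ne i j with rfl | hij
  · rw [one_apply_eq, (hZ.hasLaw_entry k i).mgf_comp (f := fun x => x * x - 1) (by fun_prop) u,
      mgf_mul_self_sub_one_gaussianReal (by linarith)]
    have : 0 < 1 - 2 * u := by linarith
    exact ⟨by positivity, exp_neg_mul_inv_sqrt_one_sub_two_mul_le hu⟩
  · have hpair := (indepFun_iff_hasLaw_prodMk_prod (hZ.hasLaw_entry k i)
      (hZ.hasLaw_entry k j)).1 (hZ.iIndepFun_entry.indepFun (show (k, i) ≠ (k, j) by simp [hij]))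
    rw [one_apply_ne hij, hpair.mgf_comp (f := fun p => p.1 * p.2 - 0) (by fun_prop) u]
    simp only [sub_zero, mgf_mul_gaussianReal_prod (by nlinarith : u ^ 2 < 1)]
    have : 0 < 1 - u ^ 2 := by nlinarith
    exact ⟨by positivity, inv_sqrt_one_sub_sq_le hu⟩

lemma measureReal_abs_sum_mul_entry_ge_le [Fintype m] (hZ : IsStdGaussianMatrix Z μ)
    (a : m → ℝ) (j : n) {ε : ℝ} (hε : 0 ≤ ε) :
    μ.real {ω | ε ≤ |∑ k, a k * Z ω k j|} ≤ 2 * exp (-ε ^ 2 / (2 * ∑ k, a k ^ 2)) := by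
  have := hZ.iIndepFun_entry.isProbabilityMeasure
  have hsum := HasSubgaussianMGF.sum_of_iIndepFun (s := Finset.univ)
    (hZ.iIndepFun_comp_row (g := fun k x => a k * x j) fun k => by fun_prop)
    fun k _ => (hZ.hasLaw_entry k j).hasSubgaussianMGF_of_gaussianReal.const_mul (a k)
  convert hsum.measureReal_abs_ge_le hε using 5
  rw [NNReal.coe_sum]
  exact Finset.sum_congr rfl fun k _ => (mul_one (a k ^ 2)).symm

lemma measureReal_abs_sum_entry_mul_entry_sub_one_ge_le [Fintype m] [DecidableEq n]
    (hZ : IsStdGaussianMatrix Z μ) (hm : 0 < Fintype.card m) (i j : n) {ε : ℝ} (hε0 : 0 ≤ ε)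
    (hε : ε ≤ 2 * Fintype.card m) :
    μ.real {ω | ε ≤ |∑ k, (Z ω k i * Z ω k j - (1 : Matrix n n ℝ) i j)|} ≤
      2 * exp (-ε ^ 2 / (16 * Fintype.card m)) := by
  have := hZ.iIndepFun_entry.isProbabilityMeasure
  have hM : (0 : ℝ) < Fintype.card m := by exact_mod_cast hm
  -- `t` minimises the Chernoff exponent `-t ε + 4 t² |m|`
  set t := ε / (8 * Fintype.card m)
  have ht : 0 ≤ t ∧ t ≤ 1 / 4 := ⟨by positivity, by rw [div_le_iff₀ (by positivity)]; linarith⟩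
  have hside : ∀ σ : ℝ, |σ| = 1 → μ.real {ω | ε ≤ ∑ k, σ * (Z ω k i * Z ω k j -
      (1 : Matrix n n ℝ) i j)} ≤ exp (-ε ^ 2 / (16 * Fintype.card m)) := fun σ hσ => by
    have hu : |σ * t| ≤ 1 / 4 := by rw [abs_mul, hσ, one_mul, abs_of_nonneg ht.1]; exact ht.2
    have hmgf := fun k => hZ.mgf_entry_mul_entry_sub_one_mem_Ioc k i j hu
    have hg : Measurable fun x : n → ℝ => σ * (x i * x j - (1 : Matrix n n ℝ) i j) := by
      fun_prop
    refine (measureReal_sum_ge_le_of_iIndepFun_of_mgf_le (hZ.iIndepFun_comp_row fun _ => hg)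
      (fun k => hg.comp (hZ.measurable_row k)) (K := 4 * t ^ 2) ht.1 (fun k => ?_)
      (fun k => ?_) ε).trans_eq ?_
    · simpa only [← mul_assoc, mul_comm t σ] using mgf_pos_iff.1 (hmgf k).1
    · simpa only [mgf_const_mul, mul_comm σ t, mul_pow, ← sq_abs σ, hσ, one_pow, mul_one] using
        (hmgf k).2
    · congr 1
      simp only [t]
      field_simp
      ring
  have hpos := hside 1 (by simp)
  have hneg := hside (-1) (by simp)
  simp only [one_mul] at hpos
  simp only [neg_one_mul, Finset.sum_neg_distrib] at hneg
  linarith [measureReal_abs_ge_le_add (μ := μ)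
    (fun ω => ∑ k, (Z ω k i * Z ω k j - (1 : Matrix n n ℝ) i j)) ε]

end IsStdGaussianMatrix

namespace Matrix

variable {m n : Type*} [Fintype m] [Fintype n]

lemma dotProduct_self_nonneg (v : n → ℝ) : 0 ≤ v ⬝ᵥ v := by
  simpa using dotProduct_star_self_nonneg v

lemma dotProduct_sq_le (v w : n → ℝ) : (v ⬝ᵥ w) ^ 2 ≤ (v ⬝ᵥ v) * (w ⬝ᵥ w) := by
  simpa only [dotProduct, sq] using Finset.sum_mul_sq_le_sq_mul_sq Finset.univ v w

lemma mulVec_dotProduct_self_le_of_abs_le {Y : Matrix m n ℝ} {u : ℝ}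
    (hY : ∀ i j, |Y i j| ≤ u) (w : n → ℝ) :
    (Y *ᵥ w) ⬝ᵥ (Y *ᵥ w) ≤ Fintype.card m * Fintype.card n * u ^ 2 * (w ⬝ᵥ w) := by
  have hrow : ∀ i, Y i ⬝ᵥ Y i ≤ Fintype.card n * u ^ 2 := fun i => by
    simpa [dotProduct, ← sq] using Finset.sum_le_sum fun j (_ : j ∈ Finset.univ) =>
      sq_le_sq' (abs_le.1 (hY i j)).1 (abs_le.1 (hY i j)).2
  calc (Y *ᵥ w) ⬝ᵥ (Y *ᵥ w) = ∑ i, (Y i ⬝ᵥ w) ^ 2 := by simp [dotProduct, mulVec, sq]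
    _ ≤ ∑ _i : m, Fintype.card n * u ^ 2 * (w ⬝ᵥ w) := Finset.sum_le_sum fun i _ =>
        (dotProduct_sq_le _ _).trans
          (mul_le_mul_of_nonneg_right (hrow i) (dotProduct_self_nonneg w))
    _ = _ := by rw [Finset.sum_const, Finset.card_univ, nsmul_eq_mul]; ring

lemma abs_dotProduct_mulVec_le_of_abs_le {B : Matrix n n ℝ} {u : ℝ} (hu : 0 ≤ u)
    (hB : ∀ i j, |B i j| ≤ u) (w : n → ℝ) :
    |w ⬝ᵥ (B *ᵥ w)| ≤ Fintype.card n * u * (w ⬝ᵥ w) := by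
  have hw := dotProduct_self_nonneg w
  refine abs_le_of_sq_le_sq ?_ (by positivity)
  calc (w ⬝ᵥ (B *ᵥ w)) ^ 2 ≤ (w ⬝ᵥ w) * ((B *ᵥ w) ⬝ᵥ (B *ᵥ w)) := dotProduct_sq_le _ _
    _ ≤ (w ⬝ᵥ w) * (Fintype.card n * Fintype.card n * u ^ 2 * (w ⬝ᵥ w)) := by
        gcongr
        exact mulVec_dotProduct_self_le_of_abs_le hB w
    _ = _ := by ring

lemma dotProduct_self_le_two_of_abs_sub_one_le [DecidableEq n] {A : Matrix n n ℝ}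
    (hA : ∀ i j, |(A - 1) i j| ≤ (2 * Fintype.card n : ℝ)⁻¹) {w : n → ℝ}
    (hw : w ⬝ᵥ (A *ᵥ w) ≤ 1) : w ⬝ᵥ w ≤ 2 := by
  rcases isEmpty_or_nonempty n with hn | hn
  · simp [dotProduct]
  have hsplit : w ⬝ᵥ (A *ᵥ w) = w ⬝ᵥ w + w ⬝ᵥ ((A - 1) *ᵥ w) := by
    simp [sub_mulVec, dotProduct_sub]
  have herr := abs_le.1 (abs_dotProduct_mulVec_le_of_abs_le (by positivity) hA w)
  have : (Fintype.card n : ℝ) * (2 * Fintype.card n : ℝ)⁻¹ = 1 / 2 := by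
    field_simp [Fintype.card_ne_zero]
  nlinarith

lemma transpose_mulVec_dotProduct_self_le [DecidableEq n] {N : ℕ} {V : Matrix (Fin N) n ℝ}
    (hV : Vᵀ * V = (N : ℝ) • 1) (y : Fin N → ℝ) :
    (Vᵀ *ᵥ y) ⬝ᵥ (Vᵀ *ᵥ y) ≤ N * (y ⬝ᵥ y) := by
  set z := Vᵀ *ᵥ y
  have hz : z ⬝ᵥ z = (V *ᵥ z) ⬝ᵥ y := by
    conv_lhs => rw [dotProduct_mulVec, vecMul_transpose]
  have hVz : (V *ᵥ z) ⬝ᵥ (V *ᵥ z) = N * (z ⬝ᵥ z) := by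
    rw [dotProduct_mulVec, ← mulVec_transpose, mulVec_mulVec, hV, smul_mulVec, one_mulVec,
      smul_dotProduct, smul_eq_mul, dotProduct_comm]
  have hCS := dotProduct_sq_le (V *ᵥ z) y
  rw [← hz, hVz] at hCS
  rcases (dotProduct_self_nonneg z).eq_or_lt with hz0 | hzpos
  · rw [← hz0]
    exact mul_nonneg N.cast_nonneg (dotProduct_self_nonneg y)
  · exact le_of_mul_le_mul_right (by nlinarith) hzpos

end Matrix

section psdSqrt

variable {n : ℕ} {A : Matrix (Fin n) (Fin n) ℝ}

lemma psdSqrt_of_posSemidef (hA : A.PosSemidef) : psdSqrt A =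
    hA.1.eigenvectorUnitary.1 * diagonal (Real.sqrt ∘ hA.1.eigenvalues) *
      (star hA.1.eigenvectorUnitary : Matrix (Fin n) (Fin n) ℝ) := by
  rw [psdSqrt, dif_pos hA]

lemma transpose_psdSqrt (hA : A.PosSemidef) : (psdSqrt A)ᵀ = psdSqrt A := by
  rw [psdSqrt_of_posSemidef hA, ← conjTranspose_eq_transpose_of_trivial]
  exact ((PosSemidef.diagonal fun i => Real.sqrt_nonneg _).mul_mul_conjTranspose_same
    _).isHermitian.eq

lemma psdSqrt_mul_self (hA : A.PosSemidef) : psdSqrt A * psdSqrt A = A := by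
  set U : Matrix (Fin n) (Fin n) ℝ := hA.1.eigenvectorUnitary.1
  have hD : diagonal (Real.sqrt ∘ hA.1.eigenvalues) * diagonal (Real.sqrt ∘ hA.1.eigenvalues)
      = diagonal hA.1.eigenvalues := by
    rw [diagonal_mul_diagonal]
    exact congrArg diagonal (funext fun i => Real.mul_self_sqrt (hA.eigenvalues_nonneg i))
  conv_rhs => rw [hA.1.spectral_theorem, Unitary.conjStarAlgAut_apply]
  rw [psdSqrt_of_posSemidef hA]
  simp only [Matrix.mul_assoc]
  rw [← Matrix.mul_assoc (star U) U, Unitary.coe_star_mul_self, Matrix.one_mul,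
    ← Matrix.mul_assoc _ _ (star U), hD]
  simp [U]

-- Only `≤`: when `psdSqrt A` is singular its junk inverse is `0`.
lemma dotProduct_mulVec_psdSqrt_inv_le (hA : A.PosSemidef) (v : Fin n → ℝ) :
    ((psdSqrt A)⁻¹ *ᵥ v) ⬝ᵥ (A *ᵥ ((psdSqrt A)⁻¹ *ᵥ v)) ≤ v ⬝ᵥ v := by
  set S := psdSqrt A
  by_cases hS : IsUnit S.det
  · have hSw : S *ᵥ (S⁻¹ *ᵥ v) = v := by rw [mulVec_mulVec, mul_nonsing_inv S hS, one_mulVec]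
    rw [← psdSqrt_mul_self hA, ← mulVec_mulVec, hSw, dotProduct_mulVec, ← mulVec_transpose,
      transpose_psdSqrt hA, hSw, dotProduct_comm]
  · rw [nonsing_inv_apply_not_isUnit S hS, zero_mulVec, zero_dotProduct]
    exact dotProduct_self_nonneg v

end psdSqrt

section eigMaxOf

variable {r : ℕ}

lemma eigMaxOf_le (hr : 0 < r) {G : Matrix (Fin r) (Fin r) ℝ} (hG : G.IsHermitian) {b : ℝ}
    (h : ∀ v : Fin r → ℝ, v ⬝ᵥ v = 1 → v ⬝ᵥ (G *ᵥ v) ≤ b) : eigMaxOf G ≤ b := by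
  have : Nonempty (Fin r) := ⟨⟨0, hr⟩⟩
  refine ciSup_le fun i => ?_
  rw [dif_pos hG, hG.eigenvalues_eq i]
  have hunit : ⇑(hG.eigenvectorBasis i) ⬝ᵥ ⇑(hG.eigenvectorBasis i) = 1 := by
    have h1 : inner ℝ (hG.eigenvectorBasis i) (hG.eigenvectorBasis i) = 1 := by
      rw [real_inner_self_eq_norm_sq, hG.eigenvectorBasis.orthonormal.1 i, one_pow]
    rwa [EuclideanSpace.inner_eq_star_dotProduct, star_trivial] at h1
  simpa using h _ hunit

lemma eigMaxOf_transpose_mul_self_le (hr : 0 < r) (M : Matrix (Fin r) (Fin r) ℝ) {b : ℝ}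
    (h : ∀ v : Fin r → ℝ, v ⬝ᵥ v = 1 → (M *ᵥ v) ⬝ᵥ (M *ᵥ v) ≤ b) :
    eigMaxOf (Mᵀ * M) ≤ b := by
  refine eigMaxOf_le hr ?_ fun v hv => ?_
  · rw [← conjTranspose_eq_transpose_of_trivial]
    exact isHermitian_conjTranspose_mul_self M
  · rw [← mulVec_mulVec, dotProduct_mulVec, vecMul_transpose]
    exact h v hv

end eigMaxOf

section overlap

variable {N r : ℕ}

noncomputable def overlap (V Z : Matrix (Fin N) (Fin r) ℝ) : Matrix (Fin r) (Fin r) ℝ :=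
  (N : ℝ)⁻¹ • (Vᵀ * (Z * (psdSqrt ((N : ℝ)⁻¹ • (Zᵀ * Z)))⁻¹))

lemma posSemidef_inv_natCast_smul_transpose_mul_self (Z : Matrix (Fin N) (Fin r) ℝ) :
    ((N : ℝ)⁻¹ • (Zᵀ * Z)).PosSemidef := by
  rw [← conjTranspose_eq_transpose_of_trivial]
  exact (posSemidef_conjTranspose_mul_self Z).smul (by positivity)

lemma overlap_mulVec (V Z : Matrix (Fin N) (Fin r) ℝ) (v : Fin r → ℝ) :
    overlap V Z *ᵥ v =
      ((N : ℝ)⁻¹ • (Vᵀ * Z)) *ᵥ ((psdSqrt ((N : ℝ)⁻¹ • (Zᵀ * Z)))⁻¹ *ᵥ v) := by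
  rw [overlap, mulVec_mulVec, smul_mul_assoc, Matrix.mul_assoc]

lemma overlap_mulVec_dotProduct_self_le {V : Matrix (Fin N) (Fin r) ℝ}
    (hV : Vᵀ * V = (N : ℝ) • 1) (Z : Matrix (Fin N) (Fin r) ℝ) (v : Fin r → ℝ) :
    (overlap V Z *ᵥ v) ⬝ᵥ (overlap V Z *ᵥ v) ≤ v ⬝ᵥ v := by
  have hw := dotProduct_mulVec_psdSqrt_inv_le (posSemidef_inv_natCast_smul_transpose_mul_self Z) v
  rw [overlap_mulVec, smul_mulVec, ← mulVec_mulVec, smul_dotProduct, dotProduct_smul,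
    smul_eq_mul, smul_eq_mul]
  set w := (psdSqrt ((N : ℝ)⁻¹ • (Zᵀ * Z)))⁻¹ *ᵥ v
  rw [smul_mulVec, dotProduct_smul, ← mulVec_mulVec, dotProduct_mulVec, vecMul_transpose,
    smul_eq_mul] at hw
  refine le_trans ?_ hw
  rcases N.eq_zero_or_pos with rfl | hN
  · simp
  calc (N : ℝ)⁻¹ * ((N : ℝ)⁻¹ * ((Vᵀ *ᵥ (Z *ᵥ w)) ⬝ᵥ (Vᵀ *ᵥ (Z *ᵥ w))))
      ≤ (N : ℝ)⁻¹ * ((N : ℝ)⁻¹ * (N * ((Z *ᵥ w) ⬝ᵥ (Z *ᵥ w)))) := by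
        gcongr
        exact transpose_mulVec_dotProduct_self_le hV (Z *ᵥ w)
    _ = (N : ℝ)⁻¹ * ((Z *ᵥ w) ⬝ᵥ (Z *ᵥ w)) := by field_simp

lemma overlap_mulVec_dotProduct_self_le_of_abs_le {V Z : Matrix (Fin N) (Fin r) ℝ} {s : ℝ}
    (hA : ∀ i j, |((N : ℝ)⁻¹ • (Zᵀ * Z) - 1 : Matrix (Fin r) (Fin r) ℝ) i j| ≤ (2 * r : ℝ)⁻¹)
    (hB : ∀ i j, |((N : ℝ)⁻¹ • (Vᵀ * Z)) i j| ≤ s) {v : Fin r → ℝ} (hv : v ⬝ᵥ v = 1) :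
    (overlap V Z *ᵥ v) ⬝ᵥ (overlap V Z *ᵥ v) ≤ 2 * r ^ 2 * s ^ 2 := by
  have hw := dotProduct_mulVec_psdSqrt_inv_le (posSemidef_inv_natCast_smul_transpose_mul_self Z) v
  rw [hv] at hw
  have hw2 := dotProduct_self_le_two_of_abs_sub_one_le (by simpa using hA) hw
  rw [overlap_mulVec]
  refine (mulVec_dotProduct_self_le_of_abs_le hB _).trans ?_
  simp only [Fintype.card_fin]
  nlinarith [mul_le_mul_of_nonneg_left hw2 (by positivity : (0 : ℝ) ≤ r * r * s ^ 2)]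

lemma sum_sq_apply_eq_of_transpose_mul_self_eq {V : Matrix (Fin N) (Fin r) ℝ}
    (hV : Vᵀ * V = (N : ℝ) • 1) (i : Fin r) : ∑ k, V k i ^ 2 = N := by
  simpa [mul_apply, sq] using congrFun₂ hV i i

lemma exists_le_abs_of_lt_eigMaxOf_overlap (hr : 0 < r) (hN : 0 < N)
    {V Z : Matrix (Fin N) (Fin r) ℝ} {t : ℝ} (ht : 0 ≤ t)
    (h : t < eigMaxOf ((overlap V Z)ᵀ * overlap V Z)) :
    ∃ i j, N / (2 * r) ≤ |∑ k, (Z k i * Z k j - (1 : Matrix (Fin r) (Fin r) ℝ) i j)| ∨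
      N * √(t / 2) / r ≤ |∑ k, V k i * Z k j| := by
  by_contra! hsmall
  have hNR : (0 : ℝ) < N := by exact_mod_cast hN
  have hA : ∀ i j, |((N : ℝ)⁻¹ • (Zᵀ * Z) - 1 : Matrix (Fin r) (Fin r) ℝ) i j| ≤
      (2 * r : ℝ)⁻¹ := fun i j => by
    have hentry : ((N : ℝ)⁻¹ • (Zᵀ * Z) - 1 : Matrix (Fin r) (Fin r) ℝ) i j =
        (N : ℝ)⁻¹ * ∑ k, (Z k i * Z k j - (1 : Matrix (Fin r) (Fin r) ℝ) i j) := by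
      simp only [Matrix.sub_apply, Matrix.smul_apply, mul_apply, transpose_apply, smul_eq_mul,
        Finset.sum_sub_distrib, Finset.sum_const, Finset.card_univ, Fintype.card_fin,
        nsmul_eq_mul]
      field_simp
    rw [hentry, abs_mul, abs_inv, Nat.abs_cast]
    calc (N : ℝ)⁻¹ * _ ≤ (N : ℝ)⁻¹ * (N / (2 * r)) := by gcongr; exact (hsmall i j).1.le
      _ = (2 * r : ℝ)⁻¹ := by field_simp
  have hB : ∀ i j, |((N : ℝ)⁻¹ • (Vᵀ * Z)) i j| ≤ √(t / 2) / r := fun i j => by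
    simp only [Matrix.smul_apply, mul_apply, transpose_apply, smul_eq_mul]
    rw [abs_mul, abs_inv, Nat.abs_cast]
    calc (N : ℝ)⁻¹ * _ ≤ (N : ℝ)⁻¹ * (N * √(t / 2) / r) := by gcongr; exact (hsmall i j).2.le
      _ = √(t / 2) / r := by field_simp
  refine h.not_ge ?_
  calc eigMaxOf ((overlap V Z)ᵀ * overlap V Z) ≤ 2 * r ^ 2 * (√(t / 2) / r) ^ 2 :=
        eigMaxOf_transpose_mul_self_le hr _ fun v hv =>
          overlap_mulVec_dotProduct_self_le_of_abs_le hA hB hv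
    _ = t := by
        have : (r : ℝ) ≠ 0 := by positivity
        rw [div_pow, sq_sqrt (by positivity)]
        field_simp

end overlap

section tail

variable {N r : ℕ} {Ω : Type*} {mΩ : MeasurableSpace Ω} {μ : Measure Ω}
  {Z : Ω → Matrix (Fin N) (Fin r) ℝ} {V : Matrix (Fin N) (Fin r) ℝ}

lemma measureReal_lt_eigMaxOf_overlap_le_sum [IsFiniteMeasure μ] (hr : 0 < r) (hN : 0 < N) {t : ℝ} (ht : 0 ≤ t) :
    μ.real {ω | t < eigMaxOf ((overlap V (Z ω))ᵀ * overlap V (Z ω))} ≤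
      ∑ p : Fin r × Fin r,
        (μ.real {ω | N / (2 * r) ≤
          |∑ k, (Z ω k p.1 * Z ω k p.2 - (1 : Matrix (Fin r) (Fin r) ℝ) p.1 p.2)|} +
        μ.real {ω | N * √(t / 2) / r ≤ |∑ k, V k p.1 * Z ω k p.2|}) := by
  refine (measureReal_mono fun ω hω => ?_).trans ((measureReal_iUnion_fintype_le _).trans
    (Finset.sum_le_sum fun p _ => measureReal_union_le _ _))
  obtain ⟨i, j, hij⟩ := exists_le_abs_of_lt_eigMaxOf_overlap hr hN ht hω
  exact Set.mem_iUnion.2 ⟨(i, j), hij⟩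

lemma measureReal_div_le_abs_sum_entry_mul_entry_sub_one_le (hr : 0 < r) (hN : 0 < N)
    (hZ : IsStdGaussianMatrix Z μ) {t : ℝ} (ht : t ≤ 1) (i j : Fin r) :
    μ.real {ω | N / (2 * r) ≤ |∑ k, (Z ω k i * Z ω k j - (1 : Matrix (Fin r) (Fin r) ℝ) i j)|} ≤
      2 * exp (-(64 * r ^ 2 : ℝ)⁻¹ * N * t) := by
  have hNR : (0 : ℝ) < N := by exact_mod_cast hN
  have hrR : (1 : ℝ) ≤ r := by exact_mod_cast hr
  refine (hZ.measureReal_abs_sum_entry_mul_entry_sub_one_ge_le (by simpa using hN) i j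
    (by positivity) ?_).trans ?_
  · rw [Fintype.card_fin, div_le_iff₀ (by positivity)]
    nlinarith
  have hexp : (N / (2 * r) : ℝ) ^ 2 / (16 * Fintype.card (Fin N)) = (64 * r ^ 2 : ℝ)⁻¹ * N := by
    rw [Fintype.card_fin]
    field_simp
    ring
  have := mul_le_mul_of_nonneg_left ht (by positivity : (0 : ℝ) ≤ (64 * r ^ 2 : ℝ)⁻¹ * N)
  rw [neg_div, hexp]
  gcongr
  linarith

lemma measureReal_mul_sqrt_le_abs_sum_mul_entry_le (hr : 0 < r) (hN : 0 < N)
    (hZ : IsStdGaussianMatrix Z μ) (hV : Vᵀ * V = (N : ℝ) • 1) {t : ℝ} (ht : 0 ≤ t)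
    (i j : Fin r) :
    μ.real {ω | N * √(t / 2) / r ≤ |∑ k, V k i * Z ω k j|} ≤
      2 * exp (-(64 * r ^ 2 : ℝ)⁻¹ * N * t) := by
  have hNR : (0 : ℝ) < N := by exact_mod_cast hN
  have hrR : (0 : ℝ) < r := by exact_mod_cast hr
  refine (hZ.measureReal_abs_sum_mul_entry_ge_le (fun k => V k i) j (by positivity)).trans ?_
  have hexp : (N * √(t / 2) / r : ℝ) ^ 2 / (2 * N) = (4 * r ^ 2 : ℝ)⁻¹ * N * t := by
    rw [div_pow, mul_pow, sq_sqrt (by positivity)]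
    field_simp
    ring
  have h64 : (64 * r ^ 2 : ℝ)⁻¹ ≤ (4 * r ^ 2 : ℝ)⁻¹ := inv_anti₀ (by positivity) (by nlinarith)
  have := mul_le_mul_of_nonneg_right h64 (by positivity : (0 : ℝ) ≤ N * t)
  rw [sum_sq_apply_eq_of_transpose_mul_self_eq hV, neg_div, hexp]
  gcongr
  linarith

lemma measureReal_lt_eigMaxOf_overlap_le (hr : 0 < r) (hN : 0 < N)
    (hZ : IsStdGaussianMatrix Z μ) (hV : Vᵀ * V = (N : ℝ) • 1) {t : ℝ} (ht0 : 0 ≤ t)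
    (ht1 : t ≤ 1) :
    μ.real {ω | t < eigMaxOf ((overlap V (Z ω))ᵀ * overlap V (Z ω))} ≤
      4 * r ^ 2 * exp (-(64 * r ^ 2 : ℝ)⁻¹ * N * t) := by
  have := hZ.iIndepFun_entry.isProbabilityMeasure
  calc _ ≤ _ := measureReal_lt_eigMaxOf_overlap_le_sum hr hN ht0
    _ ≤ ∑ _p : Fin r × Fin r, 4 * exp (-(64 * r ^ 2 : ℝ)⁻¹ * N * t) :=
        Finset.sum_le_sum fun p _ => by
          linarith [measureReal_div_le_abs_sum_entry_mul_entry_sub_one_le hr hN hZ ht1 p.1 p.2,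
            measureReal_mul_sqrt_le_abs_sum_mul_entry_le hr hN hZ hV ht0 p.1 p.2]
    _ = 4 * r ^ 2 * exp (-(64 * r ^ 2 : ℝ)⁻¹ * N * t) := by
        rw [Finset.sum_const, Finset.card_univ, Fintype.card_prod, Fintype.card_fin, nsmul_eq_mul]
        push_cast
        ring

end tail

/-- **Upper tail of the largest eigenvalue of the Gram matrix of overlaps at
random (Haar) initialization**: with `Z` an `N × r` i.i.d. standard Gaussian
matrix, `X = Z ((1/N) ZᵀZ)^{-1/2}` Haar on the normalized Stiefel manifold,
`M = (1/N) VᵀX` and `G = MᵀM`, one has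
`P(λ_max(G) > r/N + t) ≤ C(r) exp(-c(r) N t)`. -/
theorem gram_matrix_top_eigenvalue_tail (r : ℕ) (hr : 0 < r) :
    ∃ C c : ℝ, 0 < C ∧ 0 < c ∧
      ∀ (N : ℕ), 0 < N →
      ∀ (Ω : Type) (mΩ : MeasurableSpace Ω) (μ : Measure Ω), IsProbabilityMeasure μ →
      ∀ (Z : Ω → Matrix (Fin N) (Fin r) ℝ) (V : Matrix (Fin N) (Fin r) ℝ),
        Vᵀ * V = (N : ℝ) • 1 →
        (∀ k l, Measurable fun ω => Z ω k l) →
        (∀ k l, Measure.map (fun ω => Z ω k l) μ = ProbabilityTheory.gaussianReal 0 1) →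
        ProbabilityTheory.iIndepFun
          (fun (p : Fin N × Fin r) ω => Z ω p.1 p.2) μ →
      ∀ t : ℝ, 0 < t →
        μ {ω |
            let X := Z ω * (psdSqrt ((N : ℝ)⁻¹ • ((Z ω)ᵀ * Z ω)))⁻¹
            let M := (N : ℝ)⁻¹ • (Vᵀ * X)
            (r : ℝ) / N + t < eigMaxOf (Mᵀ * M)}
          ≤ ENNReal.ofReal (C * Real.exp (-c * N * t)) := by
  refine ⟨4 * r ^ 2, (64 * r ^ 2)⁻¹, by positivity, by positivity, ?_⟩
  intro N hN Ω mΩ μ hμ Z V hV hmeas hmap hind t ht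
  have hZ : IsStdGaussianMatrix Z μ :=
    ⟨hmeas, fun k l => ⟨(hmeas k l).aemeasurable, hmap k l⟩, hind⟩
  have hsub : {ω | (r : ℝ) / N + t < eigMaxOf ((overlap V (Z ω))ᵀ * overlap V (Z ω))} ⊆
      {ω | t < eigMaxOf ((overlap V (Z ω))ᵀ * overlap V (Z ω))} := fun ω hω =>
    lt_of_le_of_lt (le_add_of_nonneg_left (by positivity : (0 : ℝ) ≤ r / N)) hω
  rw [← ofReal_measureReal]
  refine ENNReal.ofReal_le_ofReal ((measureReal_mono hsub).trans ?_)
  rcases le_or_gt 1 t with ht1 | ht1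
  · have hempty : {ω | t < eigMaxOf ((overlap V (Z ω))ᵀ * overlap V (Z ω))} = ∅ :=
      Set.eq_empty_of_forall_notMem fun ω hω => (ht1.trans_lt hω).not_ge
        (eigMaxOf_transpose_mul_self_le hr _ fun v hv =>
          (overlap_mulVec_dotProduct_self_le hV _ v).trans hv.le)
    rw [hempty, measureReal_empty]
    positivity
  · exact measureReal_lt_eigMaxOf_overlap_le hr hN hZ hV ht.le ht1.le
end
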